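/- Let R > 0 and let ψ : ℝ² → ℝ be a continuous probability density (ψ ≥ 0, ∫_{ℝ²} ψ = 1) supported in the open ball B_R centered at the origin. Then there exists a constant C_R > 0 such that for all x ∈ ℝ² with |x| ≥ max(2R, 1), |(∇G_{ℝ²} ∗ ψ)(x) − ∇G_{ℝ²}(x)| ≤ C_R / |x|². -/
import Mathlib

set_option maxHeartbeats 1000000

open MeasureTheory

noncomputable section

/-- the Euclidean norm on ℝ × ℝ. -/
def norm2 (x : ℝ × ℝ) : ℝ := Real.sqrt (x.1^2 + x.2^2)

/-- gradient of the Green function on ℝ²: ∇G_{ℝ²}(x) = −(1/2π) x/|x|². -/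
def gradGR2 (x : ℝ × ℝ) : ℝ × ℝ :=
  (-(1/(2*Real.pi)) * x.1 / (x.1^2 + x.2^2), -(1/(2*Real.pi)) * x.2 / (x.1^2 + x.2^2))

lemma norm2_nonneg (x : ℝ × ℝ) : 0 ≤ norm2 x := Real.sqrt_nonneg _

lemma sq_norm2 (x : ℝ × ℝ) : (norm2 x)^2 = x.1^2 + x.2^2 :=
  Real.sq_sqrt (by positivity)

lemma norm2_le (z : ℝ × ℝ) (t : ℝ) (ht : 0 ≤ t) (h : z.1^2 + z.2^2 ≤ t^2) :
    norm2 z ≤ t := by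
  rw [norm2, ← Real.sqrt_sq ht]
  exact Real.sqrt_le_sqrt h

lemma inner_le_norm2 (u v : ℝ × ℝ) : |u.1*v.1 + u.2*v.2| ≤ norm2 u * norm2 v := by
  rw [← Real.sqrt_sq_eq_abs, norm2, norm2, ← Real.sqrt_mul (by positivity)]
  exact Real.sqrt_le_sqrt (by nlinarith [sq_nonneg (u.1*v.2 - u.2*v.1)])

lemma norm2_add_le (u v : ℝ × ℝ) : norm2 (u + v) ≤ norm2 u + norm2 v := by
  have hcs := abs_le.mp (inner_le_norm2 u v)
  have hu := sq_norm2 u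
  have hv := sq_norm2 v
  apply norm2_le _ _ (add_nonneg (norm2_nonneg u) (norm2_nonneg v))
  simp only [Prod.fst_add, Prod.snd_add]
  nlinarith [hcs.2]

lemma norm2_smul (t : ℝ) (v : ℝ × ℝ) : norm2 (t • v) = |t| * norm2 v := by
  simp only [norm2, Prod.smul_fst, Prod.smul_snd, smul_eq_mul]
  rw [show (t*v.1)^2 + (t*v.2)^2 = t^2*(v.1^2+v.2^2) by ring,
    Real.sqrt_mul (sq_nonneg t), Real.sqrt_sq_eq_abs]

lemma norm_le_norm2 (z : ℝ × ℝ) : ‖z‖ ≤ norm2 z := by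
  rw [Prod.norm_def]
  apply max_le
  · rw [Real.norm_eq_abs, ← Real.sqrt_sq_eq_abs, norm2]
    exact Real.sqrt_le_sqrt (by nlinarith [sq_nonneg z.2])
  · rw [Real.norm_eq_abs, ← Real.sqrt_sq_eq_abs, norm2]
    exact Real.sqrt_le_sqrt (by nlinarith [sq_nonneg z.1])

lemma norm2_le_two_norm (z : ℝ × ℝ) : norm2 z ≤ 2*‖z‖ := by
  have h1 : |z.1| ≤ ‖z‖ := by rw [← Real.norm_eq_abs]; exact norm_fst_le z
  have h2 : |z.2| ≤ ‖z‖ := by rw [← Real.norm_eq_abs]; exact norm_snd_le z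
  apply norm2_le _ _ (by positivity)
  nlinarith [abs_nonneg z.1, abs_nonneg z.2, norm_nonneg z, sq_abs z.1, sq_abs z.2]

lemma continuous_norm2 : Continuous norm2 :=
  Real.continuous_sqrt.comp (by fun_prop)

lemma continuousAt_gradGR2 {z : ℝ × ℝ} (hz : z ≠ 0) : ContinuousAt gradGR2 z := by
  have h0 : z.1^2 + z.2^2 ≠ 0 := by
    have hor : z.1 ≠ 0 ∨ z.2 ≠ 0 := by
      by_contra h
      push_neg at h
      exact hz (Prod.ext_iff.mpr ⟨h.1, h.2⟩)
    rcases hor with h | h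
    · positivity
    · positivity
  unfold gradGR2
  apply ContinuousAt.prodMk
  · exact (continuousAt_const.mul continuousAt_fst).div (by fun_prop) h0
  · exact (continuousAt_const.mul continuousAt_snd).div (by fun_prop) h0

lemma key_estimate (R : ℝ) (hR : 0 < R) (x y : ℝ × ℝ)
    (hx : max (2*R) 1 ≤ norm2 x) (hy : norm2 y ≤ R) :
    norm2 (gradGR2 (x - y) - gradGR2 x) ≤ (2*(3*R+R^2)/Real.pi) / (norm2 x)^2 := by
  have hnx1 : 1 ≤ norm2 x := le_trans (le_max_right _ _) hx
  have hnx2R : 2*R ≤ norm2 x := le_trans (le_max_left _ _) hx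
  have hnx0 : (0:ℝ) < norm2 x := lt_of_lt_of_le one_pos hnx1
  have hny0 : 0 ≤ norm2 y := norm2_nonneg y
  have hpi := Real.pi_pos
  have hA : x.1^2 + x.2^2 = (norm2 x)^2 := (sq_norm2 x).symm
  have hY : y.1^2 + y.2^2 = (norm2 y)^2 := (sq_norm2 y).symm
  have hs := abs_le.mp (inner_le_norm2 x y)
  have hBe : (x-y).1^2 + (x-y).2^2
      = (norm2 x)^2 - 2*(x.1*y.1+x.2*y.2) + (norm2 y)^2 := by
    simp only [Prod.fst_sub, Prod.snd_sub]
    linear_combination hA + hY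
  have h1 : (0:ℝ) ≤ norm2 x/2 - norm2 y := by linarith
  have h2 : (0:ℝ) ≤ 3*(norm2 x)/2 - norm2 y := by linarith
  have hB4 : (norm2 x)^2/4 ≤ (x-y).1^2 + (x-y).2^2 := by
    rw [hBe]
    nlinarith [hs.2, mul_nonneg h1 h2]
  have hB0 : (0:ℝ) < (x-y).1^2 + (x-y).2^2 := lt_of_lt_of_le (by positivity) hB4
  have hA0 : x.1^2 + x.2^2 ≠ 0 := by rw [hA]; positivity
  have hB0' : (x-y).1^2 + (x-y).2^2 ≠ 0 := ne_of_gt hB0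
  set B := (x-y).1^2 + (x-y).2^2 with hBdef
  set s := x.1*y.1 + x.2*y.2 with hsdef
  have hEq : gradGR2 (x - y) - gradGR2 x
      = (1/(2*Real.pi*((x.1^2+x.2^2)*B)))
        • (((y.1^2+y.2^2) - 2*s) • x + (x.1^2+x.2^2) • y) := by
    have hB0'' : (x.1-y.1)^2 + (x.2-y.2)^2 ≠ 0 := by
      simpa [hBdef, Prod.fst_sub, Prod.snd_sub] using hB0'
    refine Prod.ext_iff.mpr ⟨?_, ?_⟩ <;>
    · simp only [gradGR2, hBdef, hsdef, Prod.fst_sub, Prod.snd_sub, Prod.smul_fst,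
        Prod.smul_snd, Prod.fst_add, Prod.snd_add, smul_eq_mul]
      field_simp
      ring
  have hw : norm2 (((y.1^2+y.2^2) - 2*s) • x + (x.1^2+x.2^2) • y)
      ≤ (3*R+R^2) * (norm2 x)^2 := by
    have ht := norm2_add_le (((y.1^2+y.2^2) - 2*s) • x) ((x.1^2+x.2^2) • y)
    rw [norm2_smul, norm2_smul] at ht
    have habs1 : |(y.1^2+y.2^2) - 2*s| ≤ (norm2 y)^2 + 2*(norm2 x)*(norm2 y) := by
      rw [hY]
      rw [abs_le]
      constructor <;> nlinarith [hs.1, hs.2]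
    have habs2 : |x.1^2+x.2^2| = (norm2 x)^2 := by rw [hA]; exact abs_of_nonneg (by positivity)
    rw [habs2] at ht
    calc norm2 _ ≤ |(y.1^2+y.2^2) - 2*s| * norm2 x + (norm2 x)^2 * norm2 y := ht
      _ ≤ ((norm2 y)^2 + 2*(norm2 x)*(norm2 y)) * norm2 x + (norm2 x)^2 * norm2 y := by
          have := mul_le_mul_of_nonneg_right habs1 (le_of_lt hnx0)
          linarith
      _ ≤ (3*R+R^2) * (norm2 x)^2 := by
          have hny2 : (norm2 y)^2 ≤ R^2 := by nlinarith
          have hnxsq : norm2 x ≤ (norm2 x)^2 := by nlinarith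
          have f1 : (norm2 y)^2*(norm2 x) ≤ R^2*(norm2 x) :=
            mul_le_mul_of_nonneg_right hny2 hnx0.le
          have f2 : R^2*(norm2 x) ≤ R^2*(norm2 x)^2 :=
            mul_le_mul_of_nonneg_left hnxsq (sq_nonneg R)
          have f3 : 3*((norm2 x)^2*(norm2 y)) ≤ 3*((norm2 x)^2*R) := by
            have := mul_le_mul_of_nonneg_left hy (sq_nonneg (norm2 x))
            linarith
          nlinarith [f1, f2, f3]
  rw [hEq, norm2_smul]
  have hcabs : |1/(2*Real.pi*((x.1^2+x.2^2)*B))| = 1/(2*Real.pi*((norm2 x)^2*B)) := by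
    rw [hA]
    exact abs_of_pos (by positivity)
  rw [hcabs]
  calc (1/(2*Real.pi*((norm2 x)^2*B))) * norm2 _
      ≤ (1/(2*Real.pi*((norm2 x)^2*B))) * ((3*R+R^2) * (norm2 x)^2) :=
        mul_le_mul_of_nonneg_left hw (by positivity)
    _ = (3*R+R^2)/(2*Real.pi*B) := by field_simp
    _ ≤ (2*(3*R+R^2)/Real.pi) / (norm2 x)^2 := by
        rw [div_le_div_iff₀ (by positivity) (by positivity)]
        have heq2 : (2*(3*R+R^2)/Real.pi)*(2*Real.pi*B) = 4*(3*R+R^2)*B := by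
          field_simp; ring
        rw [heq2]
        have h3R : (0:ℝ) ≤ 3*R+R^2 := by nlinarith
        nlinarith [mul_le_mul_of_nonneg_left hB4 h3R]

/-- if ψ is a continuous probability density supported in the
open ball B_R, then `|(∇G_{ℝ²}∗ψ)(x) − ∇G_{ℝ²}(x)| ≤ C_R/|x|²` for all
`|x| ≥ max(2R,1)`. -/
theorem statement11
    (R : ℝ) (hR : 0 < R) (ψ : ℝ × ℝ → ℝ)
    (hψc : Continuous ψ) (hψnn : ∀ x, 0 ≤ ψ x) (hψint : (∫ x, ψ x) = 1)
    (hψs : Function.support ψ ⊆ {x : ℝ × ℝ | norm2 x < R}) :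
    ∃ C : ℝ, 0 < C ∧ ∀ x : ℝ × ℝ, max (2*R) 1 ≤ norm2 x →
      norm2 ((∫ y, ψ y • gradGR2 (x - y)) - gradGR2 x) ≤ C / (norm2 x)^2 := by
  have hpi := Real.pi_pos
  have hψ0 : ∀ y, R ≤ norm2 y → ψ y = 0 := by
    intro y h
    by_contra hne
    exact absurd (hψs (Function.mem_support.mpr hne)) (not_lt.2 h)
  have hψcs : HasCompactSupport ψ := by
    apply HasCompactSupport.intro (isCompact_closedBall (0:ℝ×ℝ) R)
    intro y hy
    rw [Metric.mem_closedBall, dist_zero_right] at hy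
    push_neg at hy
    exact hψ0 y (le_trans hy.le (norm_le_norm2 y))
  have hψi : Integrable ψ := hψc.integrable_of_hasCompactSupport hψcs
  refine ⟨4*(3*R+R^2)/Real.pi, by positivity, ?_⟩
  intro x hx
  have hRx : R < norm2 x := lt_of_lt_of_le (by linarith) (le_trans (le_max_left _ _) hx)
  have hcont : Continuous (fun y => ψ y • gradGR2 (x - y)) := by
    rw [continuous_iff_continuousAt]
    intro y₀
    by_cases h : y₀ = x
    · have hmem : R < norm2 y₀ := by rw [h]; exact hRx
      have hU : IsOpen {y : ℝ×ℝ | R < norm2 y} := isOpen_lt continuous_const continuous_norm2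
      have hev : ∀ᶠ y in nhds y₀, ψ y • gradGR2 (x - y) = 0 := by
        filter_upwards [hU.mem_nhds hmem] with y hy
        rw [hψ0 y (le_of_lt hy), zero_smul]
      exact continuousAt_const.congr (by filter_upwards [hev] with y h using h.symm)
    · have hx0 : x - y₀ ≠ 0 := sub_ne_zero.mpr (Ne.symm h)
      exact hψc.continuousAt.smul
        ((continuousAt_gradGR2 hx0).comp ((continuous_const.sub continuous_id).continuousAt))
  have hgs : HasCompactSupport (fun y => ψ y • gradGR2 (x - y)) := by
    apply HasCompactSupport.intro (isCompact_closedBall (0:ℝ×ℝ) R)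
    intro y hy
    rw [Metric.mem_closedBall, dist_zero_right] at hy
    push_neg at hy
    rw [hψ0 y (le_trans hy.le (norm_le_norm2 y)), zero_smul]
  have hgi : Integrable (fun y => ψ y • gradGR2 (x - y)) :=
    hcont.integrable_of_hasCompactSupport hgs
  have h2 : (∫ y, ψ y • gradGR2 x) = gradGR2 x := by
    rw [integral_smul_const, hψint, one_smul]
  have hdiff_int : Integrable (fun y => ψ y • (gradGR2 (x-y) - gradGR2 x)) := by
    simp_rw [smul_sub]
    exact hgi.sub (hψi.smul_const _)
  have h1 : (∫ y, ψ y • gradGR2 (x - y)) - gradGR2 x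
      = ∫ y, ψ y • (gradGR2 (x-y) - gradGR2 x) := by
    have hsub : (∫ y, (ψ y • gradGR2 (x-y) - ψ y • gradGR2 x))
        = (∫ y, ψ y • gradGR2 (x-y)) - ∫ y, ψ y • gradGR2 x :=
      integral_sub hgi (hψi.smul_const _)
    rw [h2] at hsub
    rw [← hsub]
    simp_rw [smul_sub]
  have hpt : ∀ y, ‖ψ y • (gradGR2 (x-y) - gradGR2 x)‖
      ≤ ψ y * ((2*(3*R+R^2)/Real.pi)/(norm2 x)^2) := by
    intro y
    rw [norm_smul, Real.norm_eq_abs, abs_of_nonneg (hψnn y)]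
    by_cases hy : ψ y = 0
    · simp [hy]
    · have hyR : norm2 y < R := hψs (Function.mem_support.mpr hy)
      exact mul_le_mul_of_nonneg_left
        (le_trans (norm_le_norm2 _) (key_estimate R hR x y hx hyR.le)) (hψnn y)
  rw [h1]
  calc norm2 (∫ y, ψ y • (gradGR2 (x-y) - gradGR2 x))
      ≤ 2*‖∫ y, ψ y • (gradGR2 (x-y) - gradGR2 x)‖ := norm2_le_two_norm _
    _ ≤ 2 * ∫ y, ‖ψ y • (gradGR2 (x-y) - gradGR2 x)‖ := by
        exact mul_le_mul_of_nonneg_left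
          (norm_integral_le_integral_norm _) (by norm_num)
    _ ≤ 2 * ∫ y, ψ y * ((2*(3*R+R^2)/Real.pi)/(norm2 x)^2) := by
        have hmono := integral_mono hdiff_int.norm (hψi.mul_const _) hpt
        linarith
    _ = (4*(3*R+R^2)/Real.pi) / (norm2 x)^2 := by
        rw [integral_mul_const, hψint]
        ring
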